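/- arXiv:1510.06420 — 5 statements merged into one kernel-verified Lean document; each statement's English description precedes it below -/
import Mathlib

section
/- For positive real numbers a and b, the integral over η from 0 to 2π of dη/√(a² + b² − 2ab·cos η) equals 4 times the integral over t from 0 to min(a,b) of dt/(√(a² − t²)·√(b² − t²)). -/
/-!
For `0 < a < b` the substitution `t = a (a - b cos η) / (b - a cos η)` maps `[0, π]` increasingly
onto `[-a, a]` and satisfies `dt / (√(a² - t²) √(b² - t²)) = dη / √(a² + b² - 2ab cos η)`;
it is the composite of `η = 2θ`, Landen's transformation and `t = a sin φ`. As both integrands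
are even and the left one is `2π`-periodic, `∫₀^{2π} = 2 ∫₀^π = 2 ∫_{-a}^{a} = 4 ∫₀^a`.
The case `b < a` is symmetric. For `a = b` both integrals diverge (like `∫ dη / η` at `0` and
`∫ dt / (a - t)` at `a`), so both sides are the junk value `0` of the Bochner integral.
-/

open Real intervalIntegral MeasureTheory Set

theorem intervalIntegral.integral_neg_self_eq_two_smul_of_even {E : Type*} [NormedAddCommGroup E]
    [NormedSpace ℝ E] {f : ℝ → E} {c : ℝ} (heven : ∀ x, f (-x) = f x)
    (hf : IntervalIntegrable f volume (-c) c) :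
    ∫ x in -c..c, f x = (2 : ℝ) • ∫ x in 0..c, f x := by
  have h0 : (0 : ℝ) ∈ uIcc (-c) c := by
    rcases le_total 0 c with hc | hc
    · exact mem_uIcc.2 (Or.inl ⟨by linarith, hc⟩)
    · exact mem_uIcc.2 (Or.inr ⟨hc, by linarith⟩)
  rw [← integral_add_adjacent_intervals (b := 0)
    (hf.mono_set (uIcc_subset_uIcc left_mem_uIcc h0))
    (hf.mono_set (uIcc_subset_uIcc h0 right_mem_uIcc))]
  have hleft : ∫ x in -c..0, f x = ∫ x in 0..c, f x := by
    simpa [heven] using (integral_comp_neg (a := 0) (b := c) f).symm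
  rw [hleft, two_smul]

theorem not_intervalIntegrable_of_mul_inv_abs_sub_le {f : ℝ → ℝ} {a b c K : ℝ} (hab : a < b)
    (hc : c ∈ Icc a b) (hK : 0 < K) (hf : ∀ x ∈ Ioc a b, K * |x - c|⁻¹ ≤ f x) :
    ¬IntervalIntegrable f volume a b := by
  intro hint
  have hinv : IntervalIntegrable (fun x => (x - c)⁻¹) volume a b := by
    refine (hint.const_mul K⁻¹).mono_fun (by fun_prop) ?_
    rw [Filter.EventuallyLE, uIoc_of_le hab.le, ae_restrict_iff' measurableSet_Ioc]
    refine ae_of_all _ fun x hx => ?_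
    have hfx := hf x hx
    have hfx0 : 0 ≤ f x := le_trans (by positivity) hfx
    rw [Real.norm_eq_abs, Real.norm_eq_abs, abs_inv, abs_of_nonneg (a := K⁻¹ * f x) (by positivity),
      le_inv_mul_iff₀ hK]
    exact hfx
  rw [intervalIntegrable_sub_inv_iff, uIcc_of_le hab.le] at hinv
  rcases hinv with h | h
  · exact hab.ne h
  · exact h hc

noncomputable def copsonSubst (a b η : ℝ) : ℝ := a * (a - b * cos η) / (b - a * cos η)

section
variable {a b : ℝ}

theorem sub_mul_cos_pos (hab : |a| < b) (η : ℝ) : 0 < b - a * cos η := by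
  have : a * cos η ≤ |a| :=
    calc a * cos η ≤ |a| * |cos η| := (le_abs_self _).trans (abs_mul a _).le
      _ ≤ |a| := mul_le_of_le_one_right (abs_nonneg a) (abs_cos_le_one η)
  linarith

theorem sq_add_sq_sub_two_mul_mul_cos_pos (hab : |a| < b) (η : ℝ) :
    0 < a ^ 2 + b ^ 2 - 2 * a * b * cos η := by
  nlinarith [sub_mul_cos_pos hab η, sin_sq_add_cos_sq η, sq_nonneg (a * sin η)]

theorem continuous_one_div_sqrt_sq_add_sq_sub_mul_cos (hab : |a| < b) :
    Continuous fun η => 1 / √(a ^ 2 + b ^ 2 - 2 * a * b * cos η) :=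
  continuous_const.div (by fun_prop) fun η =>
    (sqrt_pos.2 (sq_add_sq_sub_two_mul_mul_cos_pos hab η)).ne'

theorem hasDerivAt_copsonSubst {η : ℝ} (h : b - a * cos η ≠ 0) :
    HasDerivAt (copsonSubst a b) (a * (b ^ 2 - a ^ 2) * sin η / (b - a * cos η) ^ 2) η := by
  have hnum := ((hasDerivAt_cos η).const_mul b).const_sub a |>.const_mul a
  have hden := ((hasDerivAt_cos η).const_mul a).const_sub b
  exact (hnum.div hden h).congr_deriv (by ring)

theorem copsonSubst_zero (h : b ≠ a) : copsonSubst a b 0 = -a := by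
  rw [copsonSubst, cos_zero, mul_one, mul_one, ← neg_sub b a, mul_neg, neg_div,
    mul_div_cancel_right₀ a (sub_ne_zero.2 h)]

theorem copsonSubst_pi (h : a + b ≠ 0) : copsonSubst a b π = a := by
  rw [copsonSubst, cos_pi, mul_neg_one, mul_neg_one, sub_neg_eq_add, sub_neg_eq_add, add_comm b,
    mul_div_cancel_right₀ a h]

theorem continuous_copsonSubst (hab : |a| < b) : Continuous (copsonSubst a b) :=
  continuous_iff_continuousAt.2 fun η =>
    (hasDerivAt_copsonSubst (sub_mul_cos_pos hab η).ne').continuousAt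

theorem sq_sub_copsonSubst_sq_left {η : ℝ} (h : b - a * cos η ≠ 0) :
    a ^ 2 - copsonSubst a b η ^ 2 = a ^ 2 * (b ^ 2 - a ^ 2) * sin η ^ 2 / (b - a * cos η) ^ 2 := by
  rw [copsonSubst, sin_sq]
  field_simp
  ring

theorem sq_sub_copsonSubst_sq_right {η : ℝ} (h : b - a * cos η ≠ 0) :
    b ^ 2 - copsonSubst a b η ^ 2
      = (b ^ 2 - a ^ 2) * (a ^ 2 + b ^ 2 - 2 * a * b * cos η) / (b - a * cos η) ^ 2 := by
  rw [copsonSubst]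
  field_simp
  ring

theorem copsonSubst_deriv_mul_eq (ha : 0 < a) (hab : a < b) {η : ℝ} (hη : 0 < sin η) :
    a * (b ^ 2 - a ^ 2) * sin η / (b - a * cos η) ^ 2
        * (1 / (√(a ^ 2 - copsonSubst a b η ^ 2) * √(b ^ 2 - copsonSubst a b η ^ 2)))
      = 1 / √(a ^ 2 + b ^ 2 - 2 * a * b * cos η) := by
  have habs : |a| < b := by rwa [abs_of_pos ha]
  have hc := sub_mul_cos_pos habs η
  have hQ := sq_add_sq_sub_two_mul_mul_cos_pos habs η
  have hD : 0 < b ^ 2 - a ^ 2 := by nlinarith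
  rw [← sqrt_mul (by rw [sq_sub_copsonSubst_sq_left hc.ne']; positivity),
    sq_sub_copsonSubst_sq_left hc.ne', sq_sub_copsonSubst_sq_right hc.ne']
  have hprod : a ^ 2 * (b ^ 2 - a ^ 2) * sin η ^ 2 / (b - a * cos η) ^ 2
        * ((b ^ 2 - a ^ 2) * (a ^ 2 + b ^ 2 - 2 * a * b * cos η) / (b - a * cos η) ^ 2)
      = (a * (b ^ 2 - a ^ 2) * sin η / (b - a * cos η) ^ 2) ^ 2
        * (a ^ 2 + b ^ 2 - 2 * a * b * cos η) := by
    ring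
  rw [hprod, sqrt_mul' _ hQ.le, sqrt_sq (by positivity)]
  field_simp

theorem intervalIntegrable_and_integral_copsonSubst (ha : 0 < a) (hab : a < b) :
    IntervalIntegrable (fun t => 1 / (√(a ^ 2 - t ^ 2) * √(b ^ 2 - t ^ 2))) volume (-a) a ∧
      ∫ η in 0..π, 1 / √(a ^ 2 + b ^ 2 - 2 * a * b * cos η)
        = ∫ t in -a..a, 1 / (√(a ^ 2 - t ^ 2) * √(b ^ 2 - t ^ 2)) := by
  have habs : |a| < b := by rwa [abs_of_pos ha]
  have hcont := (continuous_copsonSubst habs).continuousOn (s := Icc 0 π)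
  have hderiv : ∀ η ∈ Ioo 0 π, HasDerivAt (copsonSubst a b)
      (a * (b ^ 2 - a ^ 2) * sin η / (b - a * cos η) ^ 2) η :=
    fun η _ => hasDerivAt_copsonSubst (sub_mul_cos_pos habs η).ne'
  have hderiv_nonneg : ∀ η ∈ Ioo 0 π, 0 ≤ a * (b ^ 2 - a ^ 2) * sin η / (b - a * cos η) ^ 2 :=
    fun η hη => by
      have := sin_pos_of_pos_of_lt_pi hη.1 hη.2
      have : 0 < b ^ 2 - a ^ 2 := by nlinarith
      positivity
  have hpt : EqOn (fun η => (a * (b ^ 2 - a ^ 2) * sin η / (b - a * cos η) ^ 2) •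
      (1 / (√(a ^ 2 - copsonSubst a b η ^ 2) * √(b ^ 2 - copsonSubst a b η ^ 2))))
      (fun η => 1 / √(a ^ 2 + b ^ 2 - 2 * a * b * cos η)) (Ioo 0 π) :=
    fun η hη => copsonSubst_deriv_mul_eq ha hab (sin_pos_of_pos_of_lt_pi hη.1 hη.2)
  have hF : IntegrableOn (fun η => 1 / √(a ^ 2 + b ^ 2 - 2 * a * b * cos η)) (Icc 0 π) :=
    (continuous_one_div_sqrt_sq_add_sq_sub_mul_cos habs).integrableOn_Icc
  have hsmul : IntegrableOn (fun η => (a * (b ^ 2 - a ^ 2) * sin η / (b - a * cos η) ^ 2) •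
      (1 / (√(a ^ 2 - copsonSubst a b η ^ 2) * √(b ^ 2 - copsonSubst a b η ^ 2)))) (Icc 0 π) := by
    rw [integrableOn_Icc_iff_integrableOn_Ioo] at hF ⊢
    exact hF.congr_fun hpt.symm measurableSet_Ioo
  have hg := (integrableOn_Icc_deriv_smul_iff_of_deriv_nonneg hcont hderiv hderiv_nonneg
    pi_pos.le (g := fun t => 1 / (√(a ^ 2 - t ^ 2) * √(b ^ 2 - t ^ 2)))).1 hsmul
  have hchange := integral_Icc_deriv_smul_of_deriv_nonneg hcont hderiv hderiv_nonneg pi_pos.le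
    (g := fun t => 1 / (√(a ^ 2 - t ^ 2) * √(b ^ 2 - t ^ 2)))
  rw [copsonSubst_zero hab.ne', copsonSubst_pi (by linarith)] at hg hchange
  refine ⟨(intervalIntegrable_iff_integrableOn_Icc_of_le (by linarith)).2 hg, ?_⟩
  rw [integral_of_le pi_pos.le, integral_of_le (by linarith), ← integral_Icc_eq_integral_Ioc,
    ← integral_Icc_eq_integral_Ioc, ← hchange, integral_Icc_eq_integral_Ioo,
    integral_Icc_eq_integral_Ioo]
  exact setIntegral_congr_fun measurableSet_Ioo hpt.symm

theorem integral_one_div_sqrt_sq_add_sq_sub_mul_cos_of_lt (ha : 0 < a) (hab : a < b) :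
    ∫ η in 0..2 * π, 1 / √(a ^ 2 + b ^ 2 - 2 * a * b * cos η)
      = 4 * ∫ t in 0..a, 1 / (√(a ^ 2 - t ^ 2) * √(b ^ 2 - t ^ 2)) := by
  obtain ⟨hg, hsubst⟩ := intervalIntegrable_and_integral_copsonSubst ha hab
  have hF := continuous_one_div_sqrt_sq_add_sq_sub_mul_cos (a := a) (by rwa [abs_of_pos ha])
  have hperiodic : Function.Periodic (fun η => 1 / √(a ^ 2 + b ^ 2 - 2 * a * b * cos η)) (2 * π) :=
    fun η => by simp only [cos_add_two_pi]
  calc ∫ η in 0..2 * π, 1 / √(a ^ 2 + b ^ 2 - 2 * a * b * cos η)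
      = ∫ η in -π..π, 1 / √(a ^ 2 + b ^ 2 - 2 * a * b * cos η) := by
        simpa [show -π + 2 * π = π by ring] using hperiodic.intervalIntegral_add_eq 0 (-π)
    _ = 2 * ∫ η in 0..π, 1 / √(a ^ 2 + b ^ 2 - 2 * a * b * cos η) :=
        integral_neg_self_eq_two_smul_of_even (fun η => by simp only [cos_neg])
          (hF.intervalIntegrable _ _)
    _ = 4 * ∫ t in 0..a, 1 / (√(a ^ 2 - t ^ 2) * √(b ^ 2 - t ^ 2)) := by
        rw [hsubst, integral_neg_self_eq_two_smul_of_even (fun t => by simp only [neg_sq]) hg,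
          smul_eq_mul, ← mul_assoc]
        norm_num

end

theorem not_intervalIntegrable_one_div_sqrt_sq_add_sq_sub_mul_cos {a : ℝ} (ha : 0 < a) :
    ¬IntervalIntegrable (fun η => 1 / √(a ^ 2 + a ^ 2 - 2 * a * a * cos η)) volume 0 (2 * π) := by
  intro h
  refine not_intervalIntegrable_of_mul_inv_abs_sub_le pi_pos ⟨le_rfl, pi_pos.le⟩ (inv_pos.2 ha)
    (fun η hη => ?_) (h.mono_set (uIcc_subset_uIcc left_mem_uIcc ?_))
  · obtain ⟨hη0, hηπ⟩ := hη
    have hsin : 0 < sin (η / 2) := sin_pos_of_pos_of_lt_pi (by linarith) (by linarith)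
    have hsq : a ^ 2 + a ^ 2 - 2 * a * a * cos η = (2 * a * sin (η / 2)) ^ 2 := by
      have hcos : cos η = 1 - 2 * sin (η / 2) ^ 2 := by
        have h2 := cos_two_mul (η / 2)
        rw [mul_div_cancel₀ η two_ne_zero] at h2
        linarith [sin_sq_add_cos_sq (η / 2)]
      rw [hcos]
      ring
    have hle : 2 * a * sin (η / 2) ≤ a * η := by nlinarith [sin_le (x := η / 2) (by linarith)]
    rw [hsq, sqrt_sq (by positivity), sub_zero, abs_of_pos hη0, ← mul_inv, ← one_div]
    exact one_div_le_one_div_of_le (by positivity) hle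
  · exact mem_uIcc.2 (Or.inl ⟨pi_pos.le, by linarith [pi_pos]⟩)

theorem not_intervalIntegrable_one_div_sqrt_sq_sub_sq_mul_self {a : ℝ} (ha : 0 < a) :
    ¬IntervalIntegrable (fun t => 1 / (√(a ^ 2 - t ^ 2) * √(a ^ 2 - t ^ 2))) volume 0 a := by
  refine not_intervalIntegrable_of_mul_inv_abs_sub_le ha ⟨ha.le, le_rfl⟩
    (inv_pos.2 (by positivity : (0 : ℝ) < 2 * a)) fun t ⟨ht0, hta⟩ => ?_
  rcases hta.lt_or_eq with hta | rfl
  · have hpos : 0 < a ^ 2 - t ^ 2 := by nlinarith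
    rw [mul_self_sqrt hpos.le, abs_of_neg (by linarith), neg_sub, ← mul_inv, ← one_div]
    exact one_div_le_one_div_of_le hpos (by nlinarith)
  · simp

theorem copson_lemma (a b : ℝ) (ha : 0 < a) (hb : 0 < b) :
    ∫ η in (0:ℝ)..(2 * π), 1 / Real.sqrt (a ^ 2 + b ^ 2 - 2 * a * b * Real.cos η)
      = 4 * ∫ t in (0:ℝ)..(min a b),
          1 / (Real.sqrt (a ^ 2 - t ^ 2) * Real.sqrt (b ^ 2 - t ^ 2)) := by
  rcases lt_trichotomy a b with hab | rfl | hba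
  · rw [min_eq_left hab.le]
    exact integral_one_div_sqrt_sq_add_sq_sub_mul_cos_of_lt ha hab
  · rw [min_self, integral_undef (not_intervalIntegrable_one_div_sqrt_sq_add_sq_sub_mul_cos ha),
      integral_undef (not_intervalIntegrable_one_div_sqrt_sq_sub_sq_mul_self ha), mul_zero]
  · rw [min_eq_right hba.le]
    simp only [mul_comm (√(a ^ 2 - _)), show ∀ η, a ^ 2 + b ^ 2 - 2 * a * b * cos η
      = b ^ 2 + a ^ 2 - 2 * b * a * cos η from fun η => by ring]
    exact integral_one_div_sqrt_sq_add_sq_sub_mul_cos_of_lt hb hba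
end

section
/- For 0 < α < π, the integral over φ from 0 to α of arctan(√((1 + cos α)/(cos φ − cos α))) · sin φ dφ equals π(1 − cos α)/2 + sin α − α. -/
/-!
Write `c = cos α` and `s φ = √((cos φ - c) / (1 + c))`. On `[0, α)` the integrand is
`(π/2 - arctan (s φ)) sin φ`, because `arctan (1/t) = π/2 - arctan t` for `t > 0`. Since
`1 + cos φ = (1 + c)(1 + s φ ²)`, the derivative of `(1 + cos φ) arctan (s φ) - (1 + c) s φ` is just
`-sin φ · arctan (s φ)`, which gives an explicit primitive. Finally `s α = 0` and `s 0 = tan (α/2)`,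
with `(1 + c) tan (α/2) = sin α`.
-/

open Real Set intervalIntegral

namespace Real

theorem arctan_sqrt_div_eq_pi_div_two_sub {a b : ℝ} (ha : 0 < a) (hb : 0 < b) :
    arctan √(a / b) = π / 2 - arctan √(b / a) := by
  rw [← inv_div, sqrt_inv, arctan_inv_of_pos (sqrt_pos.2 (div_pos hb ha))]

theorem hasDerivAt_mul_arctan_sub_mul {g u : ℝ → ℝ} {g' u' k x : ℝ} (hg : HasDerivAt g g' x)
    (hu : HasDerivAt u u' x) (hgu : g x = k * (1 + u x ^ 2)) :
    HasDerivAt (fun y => g y * arctan (u y) - k * u y) (g' * arctan (u x)) x := by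
  refine ((hg.mul hu.arctan).sub (hu.const_mul k)).congr_deriv ?_
  have : 0 < 1 + u x ^ 2 := by positivity
  rw [hgu]
  field_simp
  ring

theorem sqrt_one_sub_cos_div_one_add_cos {x : ℝ} (h₀ : 0 ≤ x) (h₁ : x < π) :
    √((1 - cos x) / (1 + cos x)) = tan (x / 2) := by
  have hcos : 0 < cos (x / 2) := cos_pos_of_mem_Ioo ⟨by linarith [pi_pos], by linarith⟩
  have hsin : 0 ≤ sin (x / 2) := sin_nonneg_of_nonneg_of_le_pi (by linarith) (by linarith)
  have hx : x = 2 * (x / 2) := by ring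
  rw [hx, cos_two_mul, ← hx, tan_eq_sin_div_cos, ← sqrt_sq (div_nonneg hsin hcos.le)]
  congr 1
  rw [div_pow, ← sin_sq_add_cos_sq (x / 2)]
  field_simp
  ring

theorem one_add_cos_mul_tan_half (x : ℝ) : (1 + cos x) * tan (x / 2) = sin x := by
  have hx : x = 2 * (x / 2) := by ring
  rw [hx, cos_two_mul, sin_two_mul, ← hx, tan_eq_sin_div_cos]
  rcases eq_or_ne (cos (x / 2)) 0 with h | h
  · simp [h]
  · field_simp
    ring

end Real

theorem hasDerivAt_cos_arctan_primitive {c x : ℝ} (hc : -1 < c) (hx : c < cos x) :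
    HasDerivAt
      (fun y => (1 + cos y) * arctan √((cos y - c) / (1 + c))
        - (1 + c) * √((cos y - c) / (1 + c)) - π / 2 * cos y)
      ((π / 2 - arctan √((cos x - c) / (1 + c))) * sin x) x := by
  have hpos : 0 < (cos x - c) / (1 + c) := div_pos (by linarith) (by linarith)
  have hu := (((hasDerivAt_cos x).sub_const c).div_const (1 + c)).sqrt hpos.ne'
  have hgu : 1 + cos x = (1 + c) * (1 + √((cos x - c) / (1 + c)) ^ 2) := by
    have : 1 + c ≠ 0 := by linarith
    rw [sq_sqrt hpos.le]
    field_simp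
    ring
  refine ((hasDerivAt_mul_arctan_sub_mul ((hasDerivAt_cos x).const_add 1) hu hgu).sub
    ((hasDerivAt_cos x).const_mul (π / 2))).congr_deriv ?_
  ring

theorem integral_arctan_sqrt_ratio (α : ℝ) (hα₀ : 0 < α) (hα₁ : α < π) :
    ∫ φ in (0:ℝ)..α,
      Real.arctan (Real.sqrt ((1 + Real.cos α) / (Real.cos φ - Real.cos α))) * Real.sin φ
      = π * (1 - Real.cos α) / 2 + Real.sin α - α := by
  have hc : -1 < cos α := by simpa using cos_lt_cos_of_nonneg_of_le_pi hα₀.le le_rfl hα₁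
  have hcos : ∀ x ∈ Ioo 0 α, cos α < cos x := fun x hx =>
    cos_lt_cos_of_nonneg_of_le_pi hx.1.le hα₁.le hx.2
  set s : ℝ → ℝ := fun x => √((cos x - cos α) / (1 + cos α))
  have hsα : s α = 0 := by simp [s]
  have hs0 : s 0 = tan (α / 2) := by simpa [s] using sqrt_one_sub_cos_div_one_add_cos hα₀.le hα₁
  calc ∫ φ in (0:ℝ)..α, arctan √((1 + cos α) / (cos φ - cos α)) * sin φ
      = ∫ φ in (0:ℝ)..α, (π / 2 - arctan (s φ)) * sin φ :=
        integral_congr_Ioo_of_le hα₀.le fun x hx => by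
          rw [arctan_sqrt_div_eq_pi_div_two_sub (by linarith) (by linarith [hcos x hx])]
    _ = ((1 + cos α) * arctan (s α) - (1 + cos α) * s α - π / 2 * cos α)
        - ((1 + cos 0) * arctan (s 0) - (1 + cos α) * s 0 - π / 2 * cos 0) :=
        integral_eq_sub_of_hasDerivAt_of_le hα₀.le (by fun_prop)
          (fun x hx => hasDerivAt_cos_arctan_primitive hc (hcos x hx))
          ((by fun_prop : Continuous fun x => (π / 2 - arctan (s x)) * sin x).intervalIntegrable
            0 α)
    _ = π * (1 - cos α) / 2 + sin α - α := by
      rw [hsα, hs0, arctan_zero, cos_zero, ← one_add_cos_mul_tan_half α,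
        arctan_tan (by linarith [pi_pos]) (by linarith)]
      ring
end

section
/- For h > 0 and 0 < α < π, the integral over φ from α to π of √(1 − cos α) · sin φ/(√(1 + h² − 2h cos φ)·√(cos α − cos φ)) dφ equals (2/√h)·sin(α/2)·log((1 + h + 2√h·cos(α/2))/√(1 + h² − 2h cos α)). -/
open Real Set

/-!
Since `1 + h² - 2h cos φ = 2h (b - cos φ)` with `b = (1 + h²) / (2h) ≥ 1`, the integral is a
constant multiple of `∫ sin φ / (√(b - cos φ) √(cos α - cos φ)) dφ`. With `u = √(b - cos φ)` and
`v = √(cos α - cos φ)` one has `(u + v)' = (u + v) sin φ / (2uv)`, so `2 log (u + v)` is a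
primitive, continuous up to the singular endpoint `φ = α`, where `v = 0`; it is increasing, which
makes the improper integrand integrable. The half-angle formulas turn its increment into the
closed form.
-/

theorem sqrt_one_sub_cos_eq {x : ℝ} (h₀ : 0 ≤ x) (h₁ : x ≤ 2 * π) :
    √(1 - cos x) = √2 * sin (x / 2) := by
  rw [sin_half_eq_sqrt h₀ h₁, ← sqrt_mul zero_le_two]
  ring_nf

theorem sqrt_one_add_cos_eq {x : ℝ} (h₀ : -π ≤ x) (h₁ : x ≤ π) :
    √(1 + cos x) = √2 * cos (x / 2) := by
  rw [cos_half h₀ h₁, ← sqrt_mul zero_le_two]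
  ring_nf

theorem hasDerivAt_log_sqrt_sub_add_sqrt_sub {a b x : ℝ} (ha : x < a) (hb : x < b) :
    HasDerivAt (fun y => log (√(a - y) + √(b - y))) (-1 / (2 * (√(a - x) * √(b - x)))) x := by
  have hu : 0 < √(a - x) := sqrt_pos.2 (sub_pos.2 ha)
  have hv : 0 < √(b - x) := sqrt_pos.2 (sub_pos.2 hb)
  have hdu := ((hasDerivAt_id' x).const_sub a).sqrt (sub_pos.2 ha).ne'
  have hdv := ((hasDerivAt_id' x).const_sub b).sqrt (sub_pos.2 hb).ne'
  refine ((hdu.add hdv).log (add_pos hu hv).ne').congr_deriv ?_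
  simp only [Pi.add_apply]
  field_simp
  ring

theorem hasDerivAt_log_sqrt_sub_cos_add_sqrt_sub_cos {a b φ : ℝ} (ha : cos φ < a)
    (hb : cos φ < b) :
    HasDerivAt (fun ψ => log (√(a - cos ψ) + √(b - cos ψ)))
      (sin φ / (2 * (√(a - cos φ) * √(b - cos φ)))) φ :=
  ((hasDerivAt_log_sqrt_sub_add_sqrt_sub ha hb).comp φ (hasDerivAt_cos φ)).congr_deriv (by ring)

theorem integral_sin_div_sqrt_sub_cos_mul_sqrt_sub_cos {α β b : ℝ} (hα : 0 ≤ α) (hαβ : α ≤ β)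
    (hβ : β ≤ π) (hb : cos α < b) :
    ∫ φ in α..β, sin φ / (√(b - cos φ) * √(cos α - cos φ)) =
      2 * log ((√(b - cos β) + √(cos α - cos β)) / √(b - cos α)) := by
  set F := fun ψ => 2 * log (√(b - cos ψ) + √(cos α - cos ψ))
  have hcos_le : ∀ φ ∈ Icc α β, cos φ ≤ cos α := fun φ hφ =>
    cos_le_cos_of_nonneg_of_le_pi hα (hφ.2.trans hβ) hφ.1
  have hsum_pos : ∀ φ ∈ Icc α β, 0 < √(b - cos φ) + √(cos α - cos φ) := fun φ hφ =>
    add_pos_of_pos_of_nonneg (sqrt_pos.2 (sub_pos.2 ((hcos_le φ hφ).trans_lt hb))) (sqrt_nonneg _)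
  have hF_cont : ContinuousOn F (Icc α β) :=
    continuousOn_const.mul (ContinuousOn.log (by fun_prop) fun φ hφ => (hsum_pos φ hφ).ne')
  have hF_deriv : ∀ φ ∈ Ioo α β,
      HasDerivAt F (sin φ / (√(b - cos φ) * √(cos α - cos φ))) φ := by
    intro φ hφ
    have hlt : cos φ < cos α := cos_lt_cos_of_nonneg_of_le_pi hα (hφ.2.le.trans hβ) hφ.1
    have hlog := hasDerivAt_log_sqrt_sub_cos_add_sqrt_sub_cos (hlt.trans hb) hlt
    refine (hlog.const_mul 2).congr_deriv ?_
    field_simp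
  have hF_deriv_nonneg : ∀ φ ∈ Ioo α β, 0 ≤ sin φ / (√(b - cos φ) * √(cos α - cos φ)) :=
    fun φ hφ => div_nonneg
      (sin_nonneg_of_nonneg_of_le_pi (hα.trans hφ.1.le) (hφ.2.le.trans hβ)) (by positivity)
  have hint := (intervalIntegrable_iff_integrableOn_Ioc_of_le hαβ).2
    (intervalIntegral.integrableOn_deriv_of_nonneg hF_cont hF_deriv hF_deriv_nonneg)
  rw [intervalIntegral.integral_eq_sub_of_hasDerivAt_of_le hαβ hF_cont hF_deriv hint]
  simp only [F, sub_self, sqrt_zero, add_zero, ← mul_sub]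
  rw [← log_div (hsum_pos β ⟨hαβ, le_rfl⟩).ne' (sqrt_pos.2 (sub_pos.2 hb)).ne']

theorem integral_point_charge_sqrt (h α : ℝ) (hh : 0 < h) (hα₀ : 0 < α) (hα₁ : α < π) :
    ∫ φ in α..π,
      Real.sqrt (1 - Real.cos α) * Real.sin φ
        / (Real.sqrt (1 + h ^ 2 - 2 * h * Real.cos φ)
          * Real.sqrt (Real.cos α - Real.cos φ))
      = (2 / Real.sqrt h) * Real.sin (α / 2)
        * Real.log ((1 + h + 2 * Real.sqrt h * Real.cos (α / 2))
          / Real.sqrt (1 + h ^ 2 - 2 * h * Real.cos α)) := by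
  set b := (1 + h ^ 2) / (2 * h)
  have hA : ∀ x, 1 + h ^ 2 - 2 * h * x = 2 * h * (b - x) := fun x => by
    rw [mul_sub, mul_div_cancel₀ _ (by positivity)]
  have hb : cos α < b := by
    have hcos : cos α < 1 := by simpa using cos_lt_cos_of_nonneg_of_le_pi le_rfl hα₁.le hα₀
    have : 1 ≤ b := by rw [one_le_div (by positivity)]; nlinarith [sq_nonneg (1 - h)]
    linarith
  have hintegrand : ∀ φ, √(1 - cos α) * sin φ / (√(1 + h ^ 2 - 2 * h * cos φ) * √(cos α - cos φ))
      = √(1 - cos α) / √(2 * h) * (sin φ / (√(b - cos φ) * √(cos α - cos φ))) := fun φ => by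
    rw [hA, sqrt_mul (by positivity), div_mul_div_comm, mul_assoc]
  have hsqrt_two_mul : √(2 * h) = √2 * √h := sqrt_mul zero_le_two h
  have hconst : √(1 - cos α) / √(2 * h) * 2 = 2 / √h * sin (α / 2) := by
    rw [sqrt_one_sub_cos_eq hα₀.le (by linarith), hsqrt_two_mul]
    field_simp
  have harg : (√(b - -1) + √(cos α - -1)) / √(b - cos α)
      = (1 + h + 2 * √h * cos (α / 2)) / √(1 + h ^ 2 - 2 * h * cos α) := by
    have hnum : √(2 * h) * √(b - -1) = 1 + h := by
      rw [← sqrt_mul (by positivity), ← hA, show 1 + h ^ 2 - 2 * h * -1 = (1 + h) ^ 2 by ring,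
        sqrt_sq (by positivity)]
    have hnum' : √(2 * h) * √(cos α - -1) = 2 * √h * cos (α / 2) := by
      rw [sub_neg_eq_add, add_comm, sqrt_one_add_cos_eq (by linarith) hα₁.le, hsqrt_two_mul,
        mul_mul_mul_comm, mul_self_sqrt zero_le_two]
      ring
    rw [hA, sqrt_mul (by positivity), ← mul_div_mul_left _ _ (by positivity : √(2 * h) ≠ 0),
      mul_add, hnum, hnum']
  rw [intervalIntegral.integral_congr fun φ _ => hintegrand φ, intervalIntegral.integral_const_mul,
    integral_sin_div_sqrt_sub_cos_mul_sqrt_sub_cos hα₀.le hα₁.le le_rfl hb, cos_pi, harg,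
    ← mul_assoc, hconst]
end

section
/- For 0 < α < π and real t with α < t ≤ π, define g(t) = −(sin t/(12π·√(1 + cos t)))·(8a cos²t + 2(2a+3b) cos t − a + 3b + 3c). Then for Q(ξ) = a cos²ξ + b cos ξ + c, one has g(t) = (1/(4π))·(d/dt) ∫_t^π Q(ξ) sin ξ/√(cos t − cos ξ) dξ for t ∈ (α, π). -/
/-!
With `x = cos s` and `v = x - cos ξ`, the integrand is `Q(x - v) / √v · dv/dξ`, and Taylor's
formula `Q(x - v) = Q(x) - Q'(x) v + a v²` gives the primitive
`√v · (2 Q(x) - (2/3) Q'(x) v + (2/5) a v²)`, which vanishes at `ξ = s`. The integral is therefore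
the value of this primitive at `v = x + 1` (that is, `ξ = π`), an elementary function of
`x = cos s` whose `t`-derivative is read off by the chain rule. Integrability comes from writing the
integrand as the continuous `Q(cos ξ)` times `sin ξ / √(x - cos ξ)`, the nonnegative derivative of
`2 √(x - cos ξ)`.
-/

open Real Set

noncomputable def abelPrimitive (a b c x v : ℝ) : ℝ :=
  √v * (2 * (a * x ^ 2 + b * x + c) - 2 / 3 * (2 * a * x + b) * v + 2 / 5 * a * v ^ 2)

lemma hasDerivAt_abelPrimitive (a b c x : ℝ) {v : ℝ} (hv : 0 < v) :
    HasDerivAt (abelPrimitive a b c x) ((a * (x - v) ^ 2 + b * (x - v) + c) / √v) v := by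
  have hpoly : HasDerivAt
      (fun v => 2 * (a * x ^ 2 + b * x + c) - 2 / 3 * (2 * a * x + b) * v + 2 / 5 * a * v ^ 2)
      (-(2 / 3 * (2 * a * x + b)) + 2 / 5 * a * (2 * v)) v := by
    have hid := hasDerivAt_id' v
    refine (((hid.const_mul (2 / 3 * (2 * a * x + b))).const_sub
      (2 * (a * x ^ 2 + b * x + c))).fun_add ((hid.fun_pow 2).const_mul (2 / 5 * a))).congr_deriv ?_
    simp
  refine ((hasDerivAt_sqrt hv.ne').mul hpoly).congr_deriv ?_
  obtain ⟨w, hw, rfl⟩ : ∃ w, 0 < w ∧ v = w ^ 2 := ⟨√v, sqrt_pos.2 hv, (sq_sqrt hv.le).symm⟩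
  rw [sqrt_sq hw.le]
  field_simp
  ring

lemma intervalIntegrable_sin_div_sqrt_cos_sub {s : ℝ} (hs₀ : 0 ≤ s) (hsπ : s ≤ π) :
    IntervalIntegrable (fun ξ => sin ξ / √(cos s - cos ξ)) MeasureTheory.volume s π := by
  refine intervalIntegral.intervalIntegrable_deriv_of_nonneg
    (g := fun ξ => 2 * √(cos s - cos ξ)) (by fun_prop) (fun ξ hξ => ?_) (fun ξ hξ => ?_)
  all_goals rw [min_eq_left hsπ, max_eq_right hsπ] at hξ
  · have hv : 0 < cos s - cos ξ := sub_pos.2 (cos_lt_cos_of_nonneg_of_le_pi hs₀ hξ.2.le hξ.1)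
    refine (((hasDerivAt_sqrt hv.ne').comp ξ
      ((hasDerivAt_cos ξ).const_sub (cos s))).const_mul 2).congr_deriv ?_
    have hne : √(cos s - cos ξ) ≠ 0 := (sqrt_pos.2 hv).ne'
    field_simp
  · exact div_nonneg (sin_nonneg_of_nonneg_of_le_pi (hs₀.trans hξ.1.le) hξ.2.le) (sqrt_nonneg _)

lemma integral_abel_quadratic (a b c : ℝ) {s : ℝ} (hs₀ : 0 ≤ s) (hsπ : s < π) :
    ∫ ξ in s..π, (a * cos ξ ^ 2 + b * cos ξ + c) * sin ξ / √(cos s - cos ξ)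
      = abelPrimitive a b c (cos s) (cos s + 1) := by
  have hderiv : ∀ ξ ∈ Ioo s π, HasDerivAt (fun ξ => abelPrimitive a b c (cos s) (cos s - cos ξ))
      ((a * cos ξ ^ 2 + b * cos ξ + c) * sin ξ / √(cos s - cos ξ)) ξ := by
    intro ξ hξ
    have hv : 0 < cos s - cos ξ := sub_pos.2 (cos_lt_cos_of_nonneg_of_le_pi hs₀ hξ.2.le hξ.1)
    refine ((hasDerivAt_abelPrimitive a b c (cos s) hv).comp ξ
      ((hasDerivAt_cos ξ).const_sub (cos s))).congr_deriv ?_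
    rw [sub_sub_cancel, neg_neg]
    ring
  have hint : IntervalIntegrable
      (fun ξ => (a * cos ξ ^ 2 + b * cos ξ + c) * sin ξ / √(cos s - cos ξ))
      MeasureTheory.volume s π := by
    simp only [mul_div_assoc]
    exact (intervalIntegrable_sin_div_sqrt_cos_sub hs₀ hsπ.le).continuousOn_mul (by fun_prop)
  rw [intervalIntegral.integral_eq_sub_of_hasDerivAt_of_le hsπ.le
    (by unfold abelPrimitive; fun_prop) hderiv hint]
  simp [abelPrimitive]

lemma hasDerivAt_abelPrimitive_self_add_one (a b c : ℝ) {x : ℝ} (hx : -1 < x) :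
    HasDerivAt (fun x => abelPrimitive a b c x (x + 1))
      ((8 * a * x ^ 2 + 2 * (2 * a + 3 * b) * x - a + 3 * b + 3 * c) / (3 * √(1 + x))) x := by
  have hx₁ : 0 < 1 + x := by linarith
  have hsqrt : HasDerivAt (fun x => √(x + 1)) (1 / (2 * √(1 + x))) x := by
    simpa [add_comm] using ((hasDerivAt_id x).add_const 1).sqrt (by simp only [id]; linarith)
  have hpoly : HasDerivAt (fun x => 2 * (a * x ^ 2 + b * x + c)
        - 2 / 3 * (2 * a * x + b) * (x + 1) + 2 / 5 * a * (x + 1) ^ 2)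
      (32 / 15 * a * x + 4 / 3 * b - 8 / 15 * a) x := by
    have hx := hasDerivAt_id' x
    have hQ := (((hx.fun_pow 2).const_mul a).fun_add (hx.const_mul b)).add_const c
    have hQ' := ((hx.const_mul (2 * a)).add_const b).const_mul (2 / 3)
    refine ((hQ.const_mul 2).fun_sub (hQ'.fun_mul (hx.add_const 1))).fun_add
      (((hx.add_const 1).fun_pow 2).const_mul (2 / 5 * a)) |>.congr_deriv ?_
    simp only [Nat.cast_ofNat, Nat.add_one_sub_one, pow_one, mul_one]
    ring
  refine (hsqrt.mul hpoly).congr_deriv ?_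
  obtain ⟨w, hw₀, rfl⟩ : ∃ w, 0 < w ∧ x = w ^ 2 - 1 :=
    ⟨√(1 + x), sqrt_pos.2 hx₁, by rw [sq_sqrt hx₁.le]; ring⟩
  simp only [add_sub_cancel, sub_add_cancel, sqrt_sq hw₀.le]
  field_simp
  ring

theorem g_formula_quadratic_general (a b c α : ℝ) (hα₀ : 0 < α) :
    ∀ t ∈ Set.Ioo α π,
      -(Real.sin t / (12 * π * Real.sqrt (1 + Real.cos t)))
          * (8 * a * Real.cos t ^ 2 + 2 * (2 * a + 3 * b) * Real.cos t
            - a + 3 * b + 3 * c)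
        = (1 / (4 * π)) * deriv (fun s : ℝ =>
            ∫ ξ in s..π, (a * Real.cos ξ ^ 2 + b * Real.cos ξ + c) * Real.sin ξ
              / Real.sqrt (Real.cos s - Real.cos ξ)) t := by
  intro t ⟨hαt, htπ⟩
  have ht₀ : 0 < t := hα₀.trans hαt
  have hcos : -1 < cos t := by
    simpa using cos_lt_cos_of_nonneg_of_le_pi ht₀.le le_rfl htπ
  have hclosed : (fun s => ∫ ξ in s..π, (a * cos ξ ^ 2 + b * cos ξ + c) * sin ξ / √(cos s - cos ξ))
      =ᶠ[nhds t] fun s => abelPrimitive a b c (cos s) (cos s + 1) := by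
    filter_upwards [Ioo_mem_nhds ht₀ htπ] with s hs
    exact integral_abel_quadratic a b c hs.1.le hs.2
  have hderiv : HasDerivAt (fun s => abelPrimitive a b c (cos s) (cos s + 1))
      (_ * -sin t) t := (hasDerivAt_abelPrimitive_self_add_one a b c hcos).comp t (hasDerivAt_cos t)
  rw [hclosed.deriv_eq, hderiv.deriv]
  have hπ : π ≠ 0 := pi_ne_zero
  field_simp
  ring

theorem g_formula_quadratic (a b c α : ℝ) (hα₀ : 0 < α) (hα₁ : α < π) :
    ∀ t ∈ Set.Ioo α π,
      -(Real.sin t / (12 * π * Real.sqrt (1 + Real.cos t)))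
          * (8 * a * Real.cos t ^ 2 + 2 * (2 * a + 3 * b) * Real.cos t
            - a + 3 * b + 3 * c)
        = (1 / (4 * π)) * deriv (fun s : ℝ =>
            ∫ ξ in s..π, (a * Real.cos ξ ^ 2 + b * Real.cos ξ + c) * Real.sin ξ
              / Real.sqrt (Real.cos s - Real.cos ξ)) t :=
  g_formula_quadratic_general a b c α hα₀
end

section
/- Let α ∈ (0, π) and suppose φ ↦ G(φ) is a continuous function on [0, α] and S: [0, α] → ℝ is continuous. If ∫_0^φ S(ζ)/√(cos ζ − cos φ) dζ = G(φ) for all φ ∈ (0, α], and G is continuously differentiable with G(0) = 0, then S(ζ) = (1/π)·(d/dζ) ∫_0^ζ G(φ) sin φ/√(cos φ − cos ζ) dφ for ζ ∈ (0, α). -/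
/-!
Multiply the equation at `φ` by `sin φ / √(cos φ - cos z)` and integrate over `φ ∈ (0, z)`.
After exchanging the order of integration over the triangle `0 < ζ < φ < z`, the inner integral
`∫_ζ^z sin φ / √((cos ζ - cos φ) (cos φ - cos z)) dφ` equals `π` for every `ζ`, because
`arcsin ((cos ζ + cos z - 2 cos φ) / (cos ζ - cos z))` is a primitive rising from `-π/2` to `π/2`.
Hence `∫_0^z G φ sin φ / √(cos φ - cos z) dφ = π ∫_0^z S`, and differentiating in `z` gives `S`.
-/

open Real Set MeasureTheory intervalIntegral

lemma hasDerivAt_arcsin_chord {a b x : ℝ} (hbx : b < x) (hxa : x < a) :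
    HasDerivAt (fun x => arcsin ((a + b - 2 * x) / (a - b)))
      (-(1 / (√(a - x) * √(x - b)))) x := by
  have hab : 0 < a - b := by linarith
  have hlin : HasDerivAt (fun x => (a + b - 2 * x) / (a - b)) (-2 / (a - b)) x := by
    simpa using (((hasDerivAt_id x).const_mul 2).const_sub (a + b)).div_const (a - b)
  have hne_neg : (a + b - 2 * x) / (a - b) ≠ -1 := by
    rw [Ne, div_eq_iff hab.ne']; intro h; linarith
  have hne_one : (a + b - 2 * x) / (a - b) ≠ 1 := by
    rw [Ne, div_eq_iff hab.ne']; intro h; linarith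
  refine ((hasDerivAt_arcsin hne_neg hne_one).comp x hlin).congr_deriv ?_
  have hax : 0 < √(a - x) := sqrt_pos.2 (by linarith)
  have hxb : 0 < √(x - b) := sqrt_pos.2 (by linarith)
  have hsq : 1 - ((a + b - 2 * x) / (a - b)) ^ 2 = (2 * √(a - x) * √(x - b) / (a - b)) ^ 2 := by
    rw [div_pow, div_pow, mul_pow, mul_pow, sq_sqrt (by linarith), sq_sqrt (by linarith)]
    field_simp; ring
  rw [hsq, sqrt_sq (by positivity)]
  field_simp

noncomputable def abelKernel (c d u : ℝ) : ℝ :=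
  sin u / (√(cos c - cos u) * √(cos u - cos d))

section AbelKernel

variable {c d : ℝ}

lemma hasDerivAt_arcsin_chord_cos (hc : 0 ≤ c) (hd : d ≤ π) {u : ℝ} (hu : u ∈ Ioo c d) :
    HasDerivAt (fun u => arcsin ((cos c + cos d - 2 * cos u) / (cos c - cos d)))
      (abelKernel c d u) u := by
  have hdu := cos_lt_cos_of_nonneg_of_le_pi (hc.trans hu.1.le) hd hu.2
  have huc := cos_lt_cos_of_nonneg_of_le_pi hc (hu.2.le.trans hd) hu.1
  refine ((hasDerivAt_arcsin_chord hdu huc).comp u (hasDerivAt_cos u)).congr_deriv ?_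
  rw [abelKernel]
  ring

lemma abelKernel_nonneg (hc : 0 ≤ c) (hd : d ≤ π) {u : ℝ} (hu : u ∈ Icc c d) :
    0 ≤ abelKernel c d u :=
  div_nonneg (sin_nonneg_of_nonneg_of_le_pi (hc.trans hu.1) (hu.2.trans hd)) (by positivity)

lemma continuous_arcsin_chord_cos :
    Continuous (fun u => arcsin ((cos c + cos d - 2 * cos u) / (cos c - cos d))) := by
  fun_prop

lemma intervalIntegrable_abelKernel (hc : 0 ≤ c) (hcd : c < d) (hd : d ≤ π) :
    IntervalIntegrable (abelKernel c d) volume c d := by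
  rw [intervalIntegrable_iff_integrableOn_Ioc_of_le hcd.le]
  exact integrableOn_deriv_of_nonneg continuous_arcsin_chord_cos.continuousOn
    (fun u hu => hasDerivAt_arcsin_chord_cos hc hd hu)
    (fun u hu => abelKernel_nonneg hc hd (Ioo_subset_Icc_self hu))

lemma integral_abelKernel (hc : 0 ≤ c) (hcd : c < d) (hd : d ≤ π) :
    ∫ u in c..d, abelKernel c d u = π := by
  have hcos : cos c - cos d ≠ 0 := (sub_pos.2 (cos_lt_cos_of_nonneg_of_le_pi hc hd hcd)).ne'
  rw [integral_eq_sub_of_hasDeriv_right_of_le hcd.le continuous_arcsin_chord_cos.continuousOn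
    (fun u hu => (hasDerivAt_arcsin_chord_cos hc hd hu).hasDerivWithinAt)
    (intervalIntegrable_abelKernel hc hcd hd)]
  have hone : (cos c + cos d - 2 * cos d) / (cos c - cos d) = 1 := by field_simp; ring
  have hneg_one : (cos c + cos d - 2 * cos c) / (cos c - cos d) = -1 := by field_simp; ring
  simp only [hone, hneg_one, arcsin_one, arcsin_neg_one]
  ring

lemma continuousOn_abelKernel (hd : d ≤ π) :
    ContinuousOn (fun p : ℝ × ℝ => abelKernel p.1 d p.2) {p | 0 ≤ p.1 ∧ p.1 < p.2 ∧ p.2 < d} := by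
  refine ContinuousOn.div (by fun_prop) (by fun_prop) ?_
  rintro ⟨x, y⟩ ⟨hx, hxy, hyd⟩
  have h1 := cos_lt_cos_of_nonneg_of_le_pi hx (hyd.le.trans hd) hxy
  have h2 := cos_lt_cos_of_nonneg_of_le_pi (hx.trans hxy.le) hd hyd
  exact (mul_pos (sqrt_pos.2 (sub_pos.2 h1)) (sqrt_pos.2 (sub_pos.2 h2))).ne'

end AbelKernel

section Triangle

variable {E : Type*} [NormedAddCommGroup E] {f : ℝ → ℝ → E} {a b : ℝ}

lemma integrableOn_triangle_iff :
    IntegrableOn (Function.uncurry f) ({p : ℝ × ℝ | p.1 < p.2} ∩ Ioo a b ×ˢ Ioo a b) ↔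
      Integrable ({p : ℝ × ℝ | p.1 < p.2}.indicator (Function.uncurry f))
        ((volume.restrict (Ioo a b)).prod (volume.restrict (Ioo a b))) := by
  have hT : MeasurableSet {p : ℝ × ℝ | p.1 < p.2} := measurableSet_lt measurable_fst measurable_snd
  rw [integrable_indicator_iff hT, Measure.prod_restrict, ← Measure.volume_eq_prod]
  simp only [IntegrableOn, Measure.restrict_restrict hT]

lemma aestronglyMeasurable_triangle_indicator
    (hf : ContinuousOn (Function.uncurry f) ({p : ℝ × ℝ | p.1 < p.2} ∩ Ioo a b ×ˢ Ioo a b)) :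
    AEStronglyMeasurable ({p : ℝ × ℝ | p.1 < p.2}.indicator (Function.uncurry f))
        ((volume.restrict (Ioo a b)).prod (volume.restrict (Ioo a b))) := by
  have hT : MeasurableSet {p : ℝ × ℝ | p.1 < p.2} := measurableSet_lt measurable_fst measurable_snd
  rw [aestronglyMeasurable_indicator_iff hT, Measure.prod_restrict, ← Measure.volume_eq_prod,
    Measure.restrict_restrict hT]
  exact hf.aestronglyMeasurable (hT.inter (measurableSet_Ioo.prod measurableSet_Ioo))

lemma triangle_indicator_apply_eq_indicator_Ioi (x y : ℝ) :
    {p : ℝ × ℝ | p.1 < p.2}.indicator (Function.uncurry f) (x, y) = (Ioi x).indicator (f x) y := by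
  simp [indicator_apply]

lemma triangle_indicator_apply_eq_indicator_Iio (x y : ℝ) :
    {p : ℝ × ℝ | p.1 < p.2}.indicator (Function.uncurry f) (x, y) =
      (Iio y).indicator (fun x => f x y) x := by
  simp [indicator_apply]

lemma setIntegral_Ioo_indicator_Ioi [NormedSpace ℝ E] {g : ℝ → E} {x : ℝ} (hx : x ∈ Ioo a b) :
    ∫ y in Ioo a b, (Ioi x).indicator g y = ∫ y in x..b, g y := by
  rw [setIntegral_indicator measurableSet_Ioi, Ioo_inter_Ioi, max_eq_right hx.1.le,
    integral_of_le hx.2.le, integral_Ioc_eq_integral_Ioo]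

lemma setIntegral_Ioo_indicator_Iio [NormedSpace ℝ E] {g : ℝ → E} {y : ℝ} (hy : y ∈ Ioo a b) :
    ∫ x in Ioo a b, (Iio y).indicator g x = ∫ x in a..y, g x := by
  rw [setIntegral_indicator measurableSet_Iio, Ioo_inter_Iio, min_eq_right hy.2.le,
    integral_of_le hy.1.le, integral_Ioc_eq_integral_Ioo]

theorem integrableOn_triangle
    (hf : ContinuousOn (Function.uncurry f) ({p : ℝ × ℝ | p.1 < p.2} ∩ Ioo a b ×ˢ Ioo a b))
    (hslice : ∀ x ∈ Ioo a b, IntervalIntegrable (f x) volume x b)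
    (hnorm : IntegrableOn (fun x => ∫ y in x..b, ‖f x y‖) (Ioo a b)) :
    IntegrableOn (Function.uncurry f) ({p : ℝ × ℝ | p.1 < p.2} ∩ Ioo a b ×ˢ Ioo a b) := by
  rw [integrableOn_triangle_iff, integrable_prod_iff (aestronglyMeasurable_triangle_indicator hf)]
  constructor
  · filter_upwards [ae_restrict_mem measurableSet_Ioo] with x hx
    simp only [triangle_indicator_apply_eq_indicator_Ioi]
    rw [integrable_indicator_iff measurableSet_Ioi, IntegrableOn,
      Measure.restrict_restrict measurableSet_Ioi, Ioi_inter_Ioo, max_eq_left hx.1.le]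
    exact ((intervalIntegrable_iff_integrableOn_Ioo_of_le hx.2.le).1 (hslice x hx))
  · refine hnorm.congr_fun (fun x hx => ?_) measurableSet_Ioo
    simp only [triangle_indicator_apply_eq_indicator_Ioi, norm_indicator_eq_indicator_norm]
    exact (setIntegral_Ioo_indicator_Ioi hx).symm

theorem integral_integral_swap_triangle [NormedSpace ℝ E] (hab : a ≤ b)
    (hf : IntegrableOn (Function.uncurry f) ({p : ℝ × ℝ | p.1 < p.2} ∩ Ioo a b ×ˢ Ioo a b)) :
    ∫ y in a..b, ∫ x in a..y, f x y = ∫ x in a..b, ∫ y in x..b, f x y := by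
  rw [integrableOn_triangle_iff] at hf
  rw [integral_of_le hab, integral_of_le hab, integral_Ioc_eq_integral_Ioo,
    integral_Ioc_eq_integral_Ioo]
  calc ∫ y in Ioo a b, ∫ x in a..y, f x y
      = ∫ y in Ioo a b, ∫ x in Ioo a b,
          {p : ℝ × ℝ | p.1 < p.2}.indicator (Function.uncurry f) (x, y) := by
        refine setIntegral_congr_fun measurableSet_Ioo (fun y hy => ?_)
        simp only [triangle_indicator_apply_eq_indicator_Iio]
        exact (setIntegral_Ioo_indicator_Iio hy).symm
    _ = ∫ x in Ioo a b, ∫ y in Ioo a b,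
          {p : ℝ × ℝ | p.1 < p.2}.indicator (Function.uncurry f) (x, y) :=
        (integral_integral_swap (f := fun x y =>
          {p : ℝ × ℝ | p.1 < p.2}.indicator (Function.uncurry f) (x, y)) hf).symm
    _ = ∫ x in Ioo a b, ∫ y in x..b, f x y := by
        refine setIntegral_congr_fun measurableSet_Ioo (fun x hx => ?_)
        simp only [triangle_indicator_apply_eq_indicator_Ioi]
        exact setIntegral_Ioo_indicator_Ioi hx

end Triangle

lemma integrableOn_triangle_mul_abelKernel {S : ℝ → ℝ} {z : ℝ} (hzπ : z ≤ π)
    (hS : ContinuousOn S (Icc 0 z)) :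
    IntegrableOn (Function.uncurry fun ζ φ => S ζ * abelKernel ζ z φ)
      ({p : ℝ × ℝ | p.1 < p.2} ∩ Ioo 0 z ×ˢ Ioo 0 z) := by
  refine integrableOn_triangle ?_ (fun ζ hζ => ?_) ?_
  · refine (hS.comp continuous_fst.continuousOn ?_).mul ((continuousOn_abelKernel hzπ).mono ?_)
    · rintro p ⟨-, hp1, -⟩; exact Ioo_subset_Icc_self hp1
    · rintro p ⟨hp, hp1, hp2⟩; exact ⟨hp1.1.le, hp, hp2.2⟩
  · exact (intervalIntegrable_abelKernel hζ.1.le hζ.2 hzπ).const_mul (S ζ)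
  · have habs : IntegrableOn (fun ζ => |S ζ| * π) (Ioo 0 z) :=
      ((hS.abs.mul continuousOn_const).integrableOn_compact isCompact_Icc).mono_set
        Ioo_subset_Icc_self
    refine habs.congr_fun (fun ζ hζ => ?_) measurableSet_Ioo
    dsimp only
    rw [← integral_abelKernel hζ.1.le hζ.2 hzπ, ← intervalIntegral.integral_const_mul]
    refine integral_congr fun φ hφ => ?_
    rw [uIcc_of_le hζ.2.le] at hφ
    rw [norm_mul, norm_of_nonneg (abelKernel_nonneg hζ.1.le hzπ hφ), norm_eq_abs]

theorem integral_abel_transform {S : ℝ → ℝ} {z : ℝ} (hz : 0 ≤ z) (hzπ : z ≤ π)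
    (hS : ContinuousOn S (Icc 0 z)) :
    ∫ φ in 0..z, (∫ ζ in 0..φ, S ζ / √(cos ζ - cos φ)) * sin φ / √(cos φ - cos z) =
      π * ∫ ζ in 0..z, S ζ := by
  calc ∫ φ in 0..z, (∫ ζ in 0..φ, S ζ / √(cos ζ - cos φ)) * sin φ / √(cos φ - cos z)
      = ∫ φ in 0..z, ∫ ζ in 0..φ, S ζ * abelKernel ζ z φ := by
        refine integral_congr fun φ _ => ?_
        rw [mul_div_assoc, ← intervalIntegral.integral_mul_const]
        refine integral_congr fun ζ _ => ?_
        rw [abelKernel]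
        ring
    _ = ∫ ζ in 0..z, ∫ φ in ζ..z, S ζ * abelKernel ζ z φ :=
        integral_integral_swap_triangle hz (integrableOn_triangle_mul_abelKernel hzπ hS)
    _ = ∫ ζ in 0..z, S ζ * π := by
        rw [integral_of_le hz, integral_of_le hz, integral_Ioc_eq_integral_Ioo,
          integral_Ioc_eq_integral_Ioo]
        refine setIntegral_congr_fun measurableSet_Ioo fun ζ hζ => ?_
        rw [intervalIntegral.integral_const_mul, integral_abelKernel hζ.1.le hζ.2 hzπ]
    _ = π * ∫ ζ in 0..z, S ζ := by rw [intervalIntegral.integral_mul_const, mul_comm]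

theorem abel_inversion_general (α : ℝ) (hα₁ : α < π)
    (G S : ℝ → ℝ)
    (hS : ContinuousOn S (Icc 0 α))
    (heq : ∀ φ ∈ Ioc (0:ℝ) α,
      ∫ ζ in (0:ℝ)..φ, S ζ / Real.sqrt (Real.cos ζ - Real.cos φ) = G φ) :
    ∀ ζ ∈ Ioo (0:ℝ) α,
      S ζ = (1 / π) * deriv (fun z : ℝ =>
        ∫ φ in (0:ℝ)..z, G φ * Real.sin φ / Real.sqrt (Real.cos φ - Real.cos z)) ζ := by
  intro ζ hζ
  have hprimitive : (fun z => ∫ φ in 0..z, G φ * sin φ / √(cos φ - cos z))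
      =ᶠ[nhds ζ] fun z => π * ∫ t in 0..z, S t := by
    filter_upwards [Ioo_mem_nhds hζ.1 hζ.2] with z hz
    rw [← integral_abel_transform hz.1.le (hz.2.trans hα₁).le
      (hS.mono (Icc_subset_Icc_right hz.2.le))]
    refine integral_congr_ae (ae_of_all _ fun φ hφ => ?_)
    rw [uIoc_of_le hz.1.le] at hφ
    rw [heq φ ⟨hφ.1, hφ.2.trans hz.2.le⟩]
  have hIcc : Icc 0 α ∈ nhds ζ := Icc_mem_nhds hζ.1 hζ.2
  have hderiv : HasDerivAt (fun z => ∫ t in 0..z, S t) (S ζ) ζ :=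
    integral_hasDerivAt_right
      ((hS.mono (Icc_subset_Icc_right hζ.2.le)).intervalIntegrable_of_Icc hζ.1.le)
      ⟨Icc 0 α, hIcc, hS.aestronglyMeasurable measurableSet_Icc⟩ (hS.continuousAt hIcc)
  rw [hprimitive.deriv_eq, (hderiv.const_mul π).deriv]
  field_simp

theorem abel_inversion (α : ℝ) (hα₀ : 0 < α) (hα₁ : α < π)
    (G S : ℝ → ℝ)
    (hG : ContinuousOn G (Icc 0 α))
    (hS : ContinuousOn S (Icc 0 α))
    (hGC1 : ContDiffOn ℝ 1 G (Icc 0 α))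
    (hG0 : G 0 = 0)
    (heq : ∀ φ ∈ Ioc (0:ℝ) α,
      ∫ ζ in (0:ℝ)..φ, S ζ / Real.sqrt (Real.cos ζ - Real.cos φ) = G φ) :
    ∀ ζ ∈ Ioo (0:ℝ) α,
      S ζ = (1 / π) * deriv (fun z : ℝ =>
        ∫ φ in (0:ℝ)..z, G φ * Real.sin φ / Real.sqrt (Real.cos φ - Real.cos z)) ζ :=
  abel_inversion_general α hα₁ G S hS heq
end
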